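/- Let J be a strongly stable monomial ideal of K[x_1,…,x_m] (m ≥ 2) and let d ≥ 1 be an integer with x_{m−1}^d ∈ J. Then J has no minimal generator of degree d+1 if and only if every monomial u of degree d with x_m·u ∈ J already satisfies u ∈ J (i.e., the degree-d piece of the ideal quotient (J : x_m) equals the degree-d piece of J). -/

import Mathlib

open MvPolynomial

namespace Paper

variable {K : Type*} [Field K] {n : ℕ}

/-- `I` is a monomial ideal: together with any polynomial it contains all its monomials. -/
def IsMonomialIdeal (I : Ideal (MvPolynomial (Fin n) K)) : Prop :=
  ∀ f ∈ I, ∀ k ∈ f.support, (monomial k (1 : K)) ∈ I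

/-- `I` is a strongly stable (Borel fixed) monomial ideal. -/
def StronglyStable (I : Ideal (MvPolynomial (Fin n) K)) : Prop :=
  IsMonomialIdeal I ∧
    ∀ k : Fin n →₀ ℕ, (monomial k (1 : K)) ∈ I →
      ∀ i j : Fin n, j < i → k i ≠ 0 →
        (monomial (k + Finsupp.single j 1 - Finsupp.single i 1) (1 : K)) ∈ I

/-- The monomial with exponent vector `k` is a minimal generator of the monomial ideal `I`. -/
def IsMinGen (I : Ideal (MvPolynomial (Fin n) K)) (k : Fin n →₀ ℕ) : Prop :=
  (monomial k (1 : K)) ∈ I ∧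
    ∀ i : Fin n, k i ≠ 0 → (monomial (k - Finsupp.single i 1) (1 : K)) ∉ I

/-- The total degree of an exponent vector. -/
def expDeg (k : Fin n →₀ ℕ) : ℕ := k.sum fun _ e => e

/-- The smallest (1-based) index of a variable occurring in the monomial `x^k`. -/
noncomputable def minIdx (k : Fin n →₀ ℕ) : ℕ :=
  sInf {v : ℕ | ∃ i : Fin n, k i ≠ 0 ∧ v = (i : ℕ) + 1}

/-- The largest (1-based) index of a variable occurring in the monomial `x^k`. -/
noncomputable def maxIdx (k : Fin n →₀ ℕ) : ℕ :=
  sSup {v : ℕ | ∃ i : Fin n, k i ≠ 0 ∧ v = (i : ℕ) + 1}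

/-- `D(I)`: the maximum of `min(m)` over minimal generators `m` of `I`. -/
noncomputable def DD (I : Ideal (MvPolynomial (Fin n) K)) : ℕ :=
  sSup {v : ℕ | ∃ k : Fin n →₀ ℕ, IsMinGen I k ∧ v = minIdx k}

/-- `M(I)`: the maximum of `max(m)` over minimal generators `m` of `I`. -/
noncomputable def MM (I : Ideal (MvPolynomial (Fin n) K)) : ℕ :=
  sSup {v : ℕ | ∃ k : Fin n →₀ ℕ, IsMinGen I k ∧ v = maxIdx k}

/-- The Hilbert function of `R/I` in (integer) degree `t`:
the `K`-dimension of the degree-`t` graded piece of `R/I`. -/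
noncomputable def HF (I : Ideal (MvPolynomial (Fin n) K)) (t : ℤ) : ℕ :=
  if 0 ≤ t then
    Module.finrank K (homogeneousSubmodule (Fin n) K t.toNat) -
      Module.finrank K
        ((homogeneousSubmodule (Fin n) K t.toNat ⊓ Submodule.restrictScalars K I :
          Submodule K (MvPolynomial (Fin n) K)))
  else 0

/-- The first difference `ΔH(R/I,t) = H(R/I,t) - H(R/I,t-1)` of the Hilbert function. -/
noncomputable def dH (I : Ideal (MvPolynomial (Fin n) K)) (t : ℤ) : ℤ :=
  (HF I t : ℤ) - HF I (t - 1)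

/-- The second difference of the Hilbert function. -/
noncomputable def d2H (I : Ideal (MvPolynomial (Fin n) K)) (t : ℤ) : ℤ :=
  dH I t - dH I (t - 1)

/-- The irrelevant maximal ideal `(x_1, …, x_n)`. -/
noncomputable def irrel (n : ℕ) (K : Type*) [Field K] : Ideal (MvPolynomial (Fin n) K) :=
  Ideal.span (Set.range X)

/-- `I` is saturated: `(I : (x_1,…,x_n)) = I`. -/
def IsSaturatedIdeal (I : Ideal (MvPolynomial (Fin n) K)) : Prop :=
  Submodule.colon I (irrel n K) = I

/-- The saturation `I^sat = ⋃ₖ (I : (x_1,…,x_n)^k)`. -/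
noncomputable def saturation (I : Ideal (MvPolynomial (Fin n) K)) :
    Ideal (MvPolynomial (Fin n) K) :=
  ⨆ k : ℕ, Submodule.colon I ((irrel n K) ^ k : Ideal (MvPolynomial (Fin n) K))

/-- `I` is a homogeneous ideal: it contains all homogeneous components of its elements. -/
def IsHomogeneousIdeal (I : Ideal (MvPolynomial (Fin n) K)) : Prop :=
  ∀ f ∈ I, ∀ i : ℕ, homogeneousComponent i f ∈ I

/-- `⟨I_{≤ d}⟩`: the ideal generated by the homogeneous elements of `I` of degree at most `d`. -/
noncomputable def idealLE (I : Ideal (MvPolynomial (Fin n) K)) (d : ℕ) : Ideal (MvPolynomial (Fin n) K) :=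
  Ideal.span {f | f ∈ I ∧ ∃ e : ℕ, e ≤ d ∧ f.IsHomogeneous e}

/-- The initial degree of `I`: the least `t` with `I_t ≠ 0`. -/
noncomputable def initDeg (I : Ideal (MvPolynomial (Fin n) K)) : ℕ :=
  sInf {t : ℕ | ∃ f ∈ I, f ≠ 0 ∧ f.IsHomogeneous t}

/-- First difference operator for integer-indexed functions. -/
def diffFun (f : ℤ → ℤ) : ℤ → ℤ := fun t => f t - f (t - 1)

/-- The depth of `R/I` with respect to the irrelevant maximal ideal: the maximal length of an
`R/I`-regular sequence of homogeneous elements of positive degree. -/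
noncomputable def homDepth (I : Ideal (MvPolynomial (Fin n) K)) : ℕ :=
  sSup {k : ℕ | ∃ rs : List (MvPolynomial (Fin n) K), rs.length = k ∧
    (∀ r ∈ rs, ∃ e : ℕ, 0 < e ∧ r.IsHomogeneous e) ∧
    RingTheory.Sequence.IsRegular (MvPolynomial (Fin n) K ⧸ I) rs}

/-- The affine cone over a set of points of projective space `ℙ^{n-1}`. -/
def cone (Z : Set (Projectivization K (Fin n → K))) : Set (Fin n → K) :=
  {v | v = 0 ∨ ∃ hv : v ≠ 0, Projectivization.mk K v hv ∈ Z}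

/-- The homogeneous vanishing ideal of a set of points of projective space:
all polynomials vanishing on the affine cone. -/
def vIdeal (Z : Set (Projectivization K (Fin n → K))) : Ideal (MvPolynomial (Fin n) K) where
  carrier := {f | ∀ v ∈ cone Z, eval v f = 0}
  add_mem' := by
    intro a b ha hb v hv
    simp [map_add, ha v hv, hb v hv]
  zero_mem' := by
    intro v hv
    simp
  smul_mem' := by
    intro c f hf v hv
    simp [smul_eq_mul, hf v hv]

/-- The Uniform Position Property: any two subsets of the same cardinality have the same
Hilbert function. -/
def UPP (Z : Finset (Projectivization K (Fin n → K))) : Prop :=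
  ∀ A B : Finset (Projectivization K (Fin n → K)), A ⊆ Z → B ⊆ Z → A.card = B.card →
    ∀ t : ℤ, HF (vIdeal (A : Set (Projectivization K (Fin n → K)))) t =
      HF (vIdeal (B : Set (Projectivization K (Fin n → K)))) t

/-- `g₂(I,t)`: the minimum over pairs of linear forms `(L₁,L₂)` of
`dim_K (R/(I + (L₁,L₂)))_t` (the value attained by a generic pair). -/
noncomputable def g2 (I : Ideal (MvPolynomial (Fin n) K)) (t : ℤ) : ℕ :=
  sInf {v : ℕ | ∃ L₁ L₂ : MvPolynomial (Fin n) K, L₁.IsHomogeneous 1 ∧ L₂.IsHomogeneous 1 ∧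
    v = HF (I ⊔ Ideal.span {L₁, L₂}) t}

/-- The Artinian reduction of `R/I` has the Weak Lefschetz Property. -/
def WLP (I : Ideal (MvPolynomial (Fin n) K)) : Prop :=
  ∃ L₁ L₂ : MvPolynomial (Fin n) K, L₁.IsHomogeneous 1 ∧ L₂.IsHomogeneous 1 ∧
    (∀ g, L₁ * g ∈ I → g ∈ I) ∧
    ∀ t : ℕ,
      (∀ f : MvPolynomial (Fin n) K, f.IsHomogeneous t →
        L₂ * f ∈ I ⊔ Ideal.span {L₁} → f ∈ I ⊔ Ideal.span {L₁}) ∨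
      (∀ g : MvPolynomial (Fin n) K, g.IsHomogeneous (t + 1) →
        ∃ f : MvPolynomial (Fin n) K, f.IsHomogeneous t ∧ g - L₂ * f ∈ I ⊔ Ideal.span {L₁})

/-!
Strong stability lets one replace a variable of a monomial in `J` by any variable of smaller
index. Iterating, `x_{m-1}^d ∈ J` puts every degree-`d` monomial in `x_1, …, x_{m-1}` into `J`.
A minimal generator of degree `d + 1` is then impossible if it avoids `x_m` (its degree-`d`
divisors lie in `J`), and if it is `x_m u` it is excluded exactly when `x_m u ∈ J` forces `u ∈ J`.
Conversely, if `x_m u ∈ J` is not minimal, some `x_m u / x_i` lies in `J`, and replacing its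
`x_m` by `x_i` gives `u ∈ J`.
-/

lemma expDeg_eq_degree {n : ℕ} (k : Fin n →₀ ℕ) : expDeg k = k.degree := rfl

lemma Finsupp.exists_eq_add_single_of_ne_zero {ι : Type*} {k : ι →₀ ℕ} {i : ι} (hi : k i ≠ 0) :
    ∃ u, k = u + Finsupp.single i 1 :=
  ⟨k - Finsupp.single i 1,
    (tsub_add_cancel_of_le (Finsupp.single_le_iff.2 (Nat.one_le_iff_ne_zero.2 hi))).symm⟩

lemma Finsupp.exists_ne_zero_of_degree_ne_zero {ι : Type*} {u : ι →₀ ℕ} (h : u.degree ≠ 0) :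
    ∃ i, u i ≠ 0 := by
  simpa [Finsupp.ne_iff] using mt (Finsupp.degree_eq_zero_iff u).2 h

section StronglyStable

variable {K : Type*} [Field K] {n : ℕ} {J : Ideal (MvPolynomial (Fin n) K)}

lemma IsMinGen.monomial_notMem {u : Fin n →₀ ℕ} {i : Fin n}
    (h : IsMinGen J (u + Finsupp.single i 1)) : monomial u (1 : K) ∉ J := by
  simpa using h.2 i (by simp)

lemma StronglyStable.monomial_add_single_mem_of_le (hJ : StronglyStable J)
    {k : Fin n →₀ ℕ} {i j : Fin n} (hij : i ≤ j)
    (h : monomial (k + Finsupp.single j 1) (1 : K) ∈ J) :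
    monomial (k + Finsupp.single i 1) (1 : K) ∈ J := by
  rcases hij.lt_or_eq with hlt | rfl
  · simpa [add_right_comm k (Finsupp.single j 1)] using hJ.2 _ h j i hlt (by simp)
  · exact h

lemma StronglyStable.monomial_add_mem_of_support_le (hJ : StronglyStable J) {j : Fin n} :
    ∀ (u : Fin n →₀ ℕ), (∀ i, u i ≠ 0 → i ≤ j) → ∀ k : Fin n →₀ ℕ,
      monomial (k + Finsupp.single j u.degree) (1 : K) ∈ J → monomial (k + u) (1 : K) ∈ J := by
  suffices ∀ d (u : Fin n →₀ ℕ), u.degree = d → (∀ i, u i ≠ 0 → i ≤ j) → ∀ k : Fin n →₀ ℕ,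
      monomial (k + Finsupp.single j d) (1 : K) ∈ J → monomial (k + u) (1 : K) ∈ J from
    fun u hu k ↦ this _ u rfl hu k
  intro d
  induction d with
  | zero =>
    intro u hdeg _ k h
    simpa [(Finsupp.degree_eq_zero_iff u).1 hdeg] using h
  | succ d ih =>
    intro u hdeg hu k h
    obtain ⟨i, hi⟩ := Finsupp.exists_ne_zero_of_degree_ne_zero (by omega : u.degree ≠ 0)
    obtain ⟨u, rfl⟩ := Finsupp.exists_eq_add_single_of_ne_zero hi
    have hdeg' : u.degree = d := by simpa using hdeg
    have hu' : ∀ a, u a ≠ 0 → a ≤ j := fun a ha ↦ hu a (by simp [ha])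
    have hmem : monomial (k + Finsupp.single j 1 + u) (1 : K) ∈ J :=
      ih u hdeg' hu' _ (by rwa [add_assoc, ← Finsupp.single_add, add_comm 1 d])
    rw [← add_assoc]
    exact hJ.monomial_add_single_mem_of_le (hu _ hi) (by rwa [add_right_comm])

lemma StronglyStable.monomial_mem_of_X_pow_mem (hJ : StronglyStable J) {j : Fin n}
    {u : Fin n →₀ ℕ} (hu : ∀ i, u i ≠ 0 → i ≤ j) (hX : (X j : MvPolynomial (Fin n) K) ^ u.degree ∈ J) :
    monomial u (1 : K) ∈ J := by
  simpa using hJ.monomial_add_mem_of_support_le u hu 0 (by simpa [X_pow_eq_monomial] using hX)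

lemma StronglyStable.monomial_mem_of_not_isMinGen (hJ : StronglyStable J) {k : Fin n →₀ ℕ}
    {l : Fin n} (hl : ∀ i, i ≤ l) (hmem : monomial (k + Finsupp.single l 1) (1 : K) ∈ J)
    (hmin : ¬ IsMinGen J (k + Finsupp.single l 1)) : monomial k (1 : K) ∈ J := by
  obtain ⟨i, hi, hiJ⟩ : ∃ i, (k + Finsupp.single l 1 : Fin n →₀ ℕ) i ≠ 0 ∧
      monomial (k + Finsupp.single l 1 - Finsupp.single i 1) (1 : K) ∈ J := by
    by_contra! h
    exact hmin ⟨hmem, h⟩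
  rcases eq_or_ne i l with rfl | hil
  · simpa using hiJ
  · obtain ⟨u, rfl⟩ := Finsupp.exists_eq_add_single_of_ne_zero (k := k) (i := i)
      (by simpa [Finsupp.single_apply, hil.symm] using hi)
    rw [add_right_comm, add_tsub_cancel_right] at hiJ
    exact hJ.monomial_add_single_mem_of_le (hl i) hiJ

lemma StronglyStable.not_isMinGen_of_X_pow_mem (hJ : StronglyStable J) {j : Fin n} {d : ℕ}
    (hX : (X j : MvPolynomial (Fin n) K) ^ d ∈ J) {k : Fin n →₀ ℕ} (hk : ∀ i, k i ≠ 0 → i ≤ j)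
    (hdeg : k.degree = d + 1) : ¬ IsMinGen J k := by
  intro hmin
  obtain ⟨i, hi⟩ := Finsupp.exists_ne_zero_of_degree_ne_zero (by omega : k.degree ≠ 0)
  obtain ⟨u, rfl⟩ := Finsupp.exists_eq_add_single_of_ne_zero hi
  refine hmin.monomial_notMem (hJ.monomial_mem_of_X_pow_mem (fun a ha ↦ hk a (by simp [ha])) ?_)
  rwa [show u.degree = d by simpa using hdeg]

end StronglyStable

theorem no_minGen_iff_colon {K : Type*} [Field K] {m : ℕ} (hm : 2 ≤ m)
    (J : Ideal (MvPolynomial (Fin m) K)) (hSS : StronglyStable J)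
    (d : ℕ)
    (hx : (X (⟨m - 2, by omega⟩ : Fin m) : MvPolynomial (Fin m) K) ^ d ∈ J) :
    (¬ ∃ k : Fin m →₀ ℕ, IsMinGen J k ∧ expDeg k = d + 1) ↔
      ∀ k : Fin m →₀ ℕ, expDeg k = d →
        (MvPolynomial.monomial (k + Finsupp.single (⟨m - 1, by omega⟩ : Fin m) 1) (1 : K)) ∈ J →
          (MvPolynomial.monomial k (1 : K)) ∈ J := by
  set l : Fin m := ⟨m - 1, by omega⟩
  have hle_l : ∀ i : Fin m, i ≤ l := fun i ↦ Fin.le_def.2 (by simp [l]; omega)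
  simp only [expDeg_eq_degree]
  constructor
  · intro hno k hdeg hmem
    exact hSS.monomial_mem_of_not_isMinGen hle_l hmem fun hmin ↦ hno ⟨_, hmin, by simp [hdeg]⟩
  · rintro hcol ⟨k, hmin, hdeg⟩
    by_cases hkl : k l = 0
    · refine hSS.not_isMinGen_of_X_pow_mem hx (fun a ha ↦ ?_) hdeg hmin
      have : (a : ℕ) ≠ m - 1 := fun h ↦ ha (by rwa [show a = l from Fin.ext h])
      show (a : ℕ) ≤ m - 2
      omega
    · obtain ⟨u, rfl⟩ := Finsupp.exists_eq_add_single_of_ne_zero hkl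
      exact hmin.monomial_notMem (hcol u (by simpa using hdeg) hmin.1)

end Paper
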